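/- For all natural n, the generalized fibonomial at argument −1/2 satisfies {−1/2 choose n}_{s,t} = (−1)ⁿ/4ⁿ · {2n choose n}_{s,t} · L_n(s,t), where L_n(s,t) = (−t)^{−n²/2}·4ⁿ / (⟨n⟩_{s,t}! · ∏_{j=0}^{n−1}(φ^{j+1/2} + φ'^{j+1/2})). -/

import Mathlib

noncomputable section
open Real

/-- Generalized Fibonacci function {α} = (φ^α − φ'^α)/(φ−φ'), real powers. -/
def genFibFun (φ φ' α : ℝ) : ℝ := (φ ^ α - φ' ^ α) / (φ - φ')

/-- Generalized Lucas function ⟨α⟩ = φ^α + φ'^α. -/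
def genLucasFun (φ φ' α : ℝ) : ℝ := φ ^ α + φ' ^ α

def fibtorial (φ φ' : ℝ) (n : ℕ) : ℝ := ∏ j ∈ Finset.range n, genFibFun φ φ' ((j : ℝ) + 1)

def lucastorial (φ φ' : ℝ) (n : ℕ) : ℝ := ∏ j ∈ Finset.range n, genLucasFun φ φ' ((j : ℝ) + 1)

/-- L_m(s,t) = (−t)^{−m²/2}·4^m / (⟨m⟩! · ∏_{j=0}^{m−1} (φ^{j+1/2} + φ'^{j+1/2})). -/
def Lfun (t φ φ' : ℝ) (m : ℕ) : ℝ :=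
  (-t) ^ (-(m ^ 2 : ℝ) / 2) * 4 ^ m /
    (lucastorial φ φ' m * ∏ j ∈ Finset.range m, (φ ^ ((j : ℝ) + 1 / 2) + φ' ^ ((j : ℝ) + 1 / 2)))

/-- Generalized fibonomial {α choose n} = {α}{α−1}⋯{α−n+1}/{n}!. -/
def genFibonomial (φ φ' α : ℝ) (n : ℕ) : ℝ :=
  (∏ j ∈ Finset.range n, genFibFun φ φ' (α - j)) / fibtorial φ φ' n

/-- Central fibonomial coefficient {2n choose n}. -/
def centralFibonomial (φ φ' : ℝ) (n : ℕ) : ℝ :=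
  fibtorial φ φ' (2 * n) / (fibtorial φ φ' n * fibtorial φ φ' n)

/-!
Writing `-1/2 - j = -(j + 1/2)`, the reflection `{-α} = -(φφ')^(-α) {α}` and the duplication
`{2α} = {α}⟨α⟩` turn each factor `{-1/2 - j}` of the numerator into
`-(φφ')^(-(j+1/2)) {2j+1} / ⟨j+1/2⟩`. Splitting `{2n}!` into its odd and even factors and applying
the duplication formula to the even ones gives `{2n}! = (∏_{j<n} {2j+1}) {n}! ⟨n⟩!`, so the
odd product is `{n}!² {2n choose n} / ⟨n⟩!`. Finally `φφ' = -t` and `∑_{j<n} (j + 1/2) = n²/2`.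
-/

lemma Finset.sum_range_add_half (n : ℕ) :
    ∑ j ∈ Finset.range n, ((j : ℝ) + 1 / 2) = (n : ℝ) ^ 2 / 2 := by
  induction n with
  | zero => simp
  | succ n ih => rw [Finset.sum_range_succ, ih]; push_cast; ring

lemma genLucasFun_pos {φ φ' : ℝ} (hφ : 0 < φ) (hφ' : 0 < φ') (α : ℝ) :
    0 < genLucasFun φ φ' α :=
  add_pos (rpow_pos_of_pos hφ α) (rpow_pos_of_pos hφ' α)

lemma genFibFun_pos {φ φ' : ℝ} (hφ' : 0 ≤ φ') (hlt : φ' < φ) {α : ℝ} (hα : 0 < α) :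
    0 < genFibFun φ φ' α :=
  div_pos (sub_pos.2 (rpow_lt_rpow hφ' hlt hα)) (sub_pos.2 hlt)

lemma genFibFun_two_mul {φ φ' : ℝ} (hφ : 0 ≤ φ) (hφ' : 0 ≤ φ') (α : ℝ) :
    genFibFun φ φ' (2 * α) = genFibFun φ φ' α * genLucasFun φ φ' α := by
  simp only [genFibFun, genLucasFun, mul_comm (2 : ℝ) α, rpow_mul hφ, rpow_mul hφ', rpow_two]
  ring

lemma genFibFun_neg {φ φ' : ℝ} (hφ : 0 < φ) (hφ' : 0 < φ') (α : ℝ) :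
    genFibFun φ φ' (-α) = -(φ * φ') ^ (-α) * genFibFun φ φ' α := by
  have hφα := (rpow_pos_of_pos hφ α).ne'
  have hφ'α := (rpow_pos_of_pos hφ' α).ne'
  simp only [genFibFun, rpow_neg hφ.le, rpow_neg hφ'.le, rpow_neg (mul_nonneg hφ.le hφ'.le),
    mul_rpow hφ.le hφ'.le]
  field_simp
  ring

lemma genFibFun_neg_half_sub {φ φ' : ℝ} (hφ : 0 < φ) (hφ' : 0 < φ') (j : ℝ) :
    genFibFun φ φ' (-(1 / 2) - j) =
      -(φ * φ') ^ (-(j + 1 / 2)) * (genFibFun φ φ' (2 * j + 1) / genLucasFun φ φ' (j + 1 / 2)) := by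
  rw [show -(1 / 2) - j = -(j + 1 / 2) by ring, show 2 * j + 1 = 2 * (j + 1 / 2) by ring,
    genFibFun_neg hφ hφ', genFibFun_two_mul hφ.le hφ'.le,
    mul_div_cancel_right₀ _ (genLucasFun_pos hφ hφ' _).ne']

lemma prod_genFibFun_neg_half_sub {φ φ' : ℝ} (hφ : 0 < φ) (hφ' : 0 < φ') (n : ℕ) :
    ∏ j ∈ Finset.range n, genFibFun φ φ' (-(1 / 2) - j) =
      (-1) ^ n * (φ * φ') ^ (-(n : ℝ) ^ 2 / 2) *
        ((∏ j ∈ Finset.range n, genFibFun φ φ' (2 * j + 1)) /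
          ∏ j ∈ Finset.range n, genLucasFun φ φ' (j + 1 / 2)) := by
  have hexp : (φ * φ') ^ (-(n : ℝ) ^ 2 / 2) =
      ∏ j ∈ Finset.range n, (φ * φ') ^ (-((j : ℝ) + 1 / 2)) := by
    rw [← rpow_sum_of_pos (mul_pos hφ hφ'), Finset.sum_neg_distrib, Finset.sum_range_add_half,
      neg_div]
  simp only [genFibFun_neg_half_sub hφ hφ']
  rw [hexp, Finset.prod_mul_distrib, Finset.prod_div_distrib, Finset.prod_neg, Finset.card_range]

lemma fibtorial_two_mul {φ φ' : ℝ} (hφ : 0 ≤ φ) (hφ' : 0 ≤ φ') (n : ℕ) :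
    fibtorial φ φ' (2 * n) =
      (∏ j ∈ Finset.range n, genFibFun φ φ' (2 * j + 1)) * fibtorial φ φ' n *
        lucastorial φ φ' n := by
  induction n with
  | zero => simp [fibtorial, lucastorial]
  | succ n ih =>
    simp only [fibtorial, lucastorial, Nat.mul_succ, Finset.prod_range_succ] at ih ⊢
    rw [ih]
    push_cast
    rw [show 2 * (n : ℝ) + 1 + 1 = 2 * (n + 1) by ring, genFibFun_two_mul hφ hφ']
    ring

lemma fibtorial_pos {φ φ' : ℝ} (hφ' : 0 ≤ φ') (hlt : φ' < φ) (n : ℕ) : 0 < fibtorial φ φ' n :=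
  Finset.prod_pos fun _ _ => genFibFun_pos hφ' hlt (by positivity)

lemma lucastorial_pos {φ φ' : ℝ} (hφ : 0 < φ) (hφ' : 0 < φ') (n : ℕ) : 0 < lucastorial φ φ' n :=
  Finset.prod_pos fun _ _ => genLucasFun_pos hφ hφ' _

lemma pos_lt_mul_eq_of_quadratic_roots {s t φ φ' : ℝ} (hs : 0 < s) (ht : t < 0)
    (hdisc : 0 < s ^ 2 + 4 * t) (hφ : φ = (s + √(s ^ 2 + 4 * t)) / 2)
    (hφ' : φ' = (s - √(s ^ 2 + 4 * t)) / 2) :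
    0 < φ' ∧ φ' < φ ∧ φ * φ' = -t := by
  subst hφ hφ'
  have hsqrt_lt : √(s ^ 2 + 4 * t) < s := (sqrt_lt' hs).2 (by linarith)
  have hsqrt_pos : 0 < √(s ^ 2 + 4 * t) := sqrt_pos.2 hdisc
  have hsq := sq_sqrt hdisc.le
  exact ⟨by linarith, by linarith, by linear_combination -hsq / 4⟩

theorem genFibonomial_neg_half (s t : ℝ) (hs : 0 < s) (ht : t < 0)
    (hdisc : s ^ 2 + 4 * t > 0) (φ φ' : ℝ)
    (hφ : φ = (s + Real.sqrt (s ^ 2 + 4 * t)) / 2)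
    (hφ' : φ' = (s - Real.sqrt (s ^ 2 + 4 * t)) / 2)
    (n : ℕ) :
    genFibonomial φ φ' (-(1 / 2)) n =
      ((-1 : ℝ) ^ n / 4 ^ n) * centralFibonomial φ φ' n * Lfun t φ φ' n := by
  obtain ⟨hφ'_pos, hlt, hprod⟩ := pos_lt_mul_eq_of_quadratic_roots hs ht hdisc hφ hφ'
  have hφ_pos : 0 < φ := hφ'_pos.trans hlt
  have hhalf : ∏ j ∈ Finset.range n, genLucasFun φ φ' (j + 1 / 2) ≠ 0 :=
    (Finset.prod_pos fun _ _ => genLucasFun_pos hφ_pos hφ'_pos _).ne'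
  have hfib := (fibtorial_pos hφ'_pos.le hlt n).ne'
  have hluc := (lucastorial_pos hφ_pos hφ'_pos n).ne'
  unfold genFibonomial centralFibonomial Lfun
  rw [prod_genFibFun_neg_half_sub hφ_pos hφ'_pos, fibtorial_two_mul hφ_pos.le hφ'_pos.le, hprod]
  simp only [genLucasFun] at hhalf ⊢
  field_simp
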